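/- arXiv:1910.12648 — 4 statements merged into one kernel-verified Lean document; each statement's English description precedes it below -/
import Mathlib

section
/- Every Maya diagram M has a unique representation M = Ξ(B) for a finite set B ⊆ ℤ of odd cardinality 2g+1; that is, there exist unique g ≥ 0 and integers b₀ < b₁ < ⋯ < b_{2g} such that M = {k : k < b₀} ∪ [b₁, b₂) ∪ ⋯ ∪ [b_{2g−1}, b_{2g}), where [m, n) = {j ∈ ℤ : m ≤ j < n}. The number g is called the genus of M and (b₀, …, b_{2g}) its block coordinates. -/
/-- A Maya diagram: a set of integers containing only finitely many
nonnegative integers and excluding only finitely many negative integers. -/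
def IsMaya (M : Set ℤ) : Prop :=
  (M ∩ {k : ℤ | 0 ≤ k}).Finite ∧ ({k : ℤ | k < 0} \ M).Finite

/-- The Maya diagram `Ξ(b) = (-∞, b₀) ∪ [b₁, b₂) ∪ ⋯ ∪ [b_{2g-1}, b_{2g})`
determined by block coordinates `b : Fin (2g+1) → ℤ`. -/
def XiSet (g : ℕ) (b : Fin (2 * g + 1) → ℤ) : Set ℤ :=
  {k : ℤ | k < b ⟨0, by omega⟩} ∪
    ⋃ i : Fin g, Set.Ico (b ⟨2 * i.val + 1, by have := i.isLt; omega⟩)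
      (b ⟨2 * i.val + 2, by have := i.isLt; omega⟩)

/-!
A set `M ⊆ ℤ` is determined by one of its points together with its flip set, the set of `k`
where membership changes between `k - 1` and `k`. The flip set `B` of a Maya diagram is finite,
and `M` consists of the `k` for which an even number of points of `B` lie at or below `k`;
since `M` contains all very negative integers and no very large ones, `|B|` is odd.
Listing `B` increasingly as `b₀ < ⋯ < b_{2g}` gives `M = Ξ(B)`, and conversely the flip set of
`Ξ(b)` is `{b₀, …, b_{2g}}`, which forces uniqueness.
-/

open Finset

def flipSet (M : Set ℤ) : Set ℤ := {k | ¬ (k - 1 ∈ M ↔ k ∈ M)}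

def parityCut (F : Finset ℤ) : Set ℤ := {k | Even #{x ∈ F | x ≤ k}}

theorem eq_of_flipSet_eq {M M' : Set ℤ} (h : flipSet M = flipSet M') {k₀ : ℤ}
    (hk₀ : k₀ ∈ M ↔ k₀ ∈ M') : M = M' := by
  ext k
  induction k using Int.inductionOn' (b := k₀) with
  | zero => exact hk₀
  | succ k _ ih =>
    have hflip := Set.ext_iff.1 h (k + 1)
    simp only [flipSet, Set.mem_ofPred_eq, add_sub_cancel_right] at hflip
    tauto
  | pred k _ ih =>
    have hflip := Set.ext_iff.1 h k
    simp only [flipSet, Set.mem_ofPred_eq] at hflip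
    tauto

theorem flipSet_subset_Ioc {M : Set ℤ} {a n : ℤ} (ha : ∀ k ≤ a, k ∈ M)
    (hn : ∀ k ≥ n, k ∉ M) :
    flipSet M ⊆ Set.Ioc a n := by
  intro k hk
  by_contra hk'
  rcases not_and_or.1 hk' with h | h
  · exact hk ⟨fun _ ↦ ha k (by omega), fun _ ↦ ha (k - 1) (by omega)⟩
  · exact hk ⟨fun hM ↦ (hn (k - 1) (by omega) hM).elim, fun hM ↦ (hn k (by omega) hM).elim⟩

theorem card_filter_le_eq_card_filter_le_sub_one_add (F : Finset ℤ) (k : ℤ) :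
    #{x ∈ F | x ≤ k} = #{x ∈ F | x ≤ k - 1} + if k ∈ F then 1 else 0 := by
  have hsplit : {x ∈ F | x ≤ k} = {x ∈ F | x ≤ k - 1} ∪ {x ∈ F | x = k} := by
    rw [← filter_or]
    exact filter_congr fun x _ ↦ by omega
  rw [hsplit, card_union_of_disjoint (disjoint_filter.2 fun x _ _ ↦ by omega), filter_eq']
  split_ifs <;> rfl

theorem flipSet_parityCut (F : Finset ℤ) : flipSet (parityCut F) = F := by
  ext k
  simp only [flipSet, parityCut, Set.mem_ofPred_eq, mem_coe,
    card_filter_le_eq_card_filter_le_sub_one_add F k]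
  split_ifs with hk <;> simp [hk, Nat.even_add_one, -Nat.not_even_iff_odd]

theorem Fin.lt_card_filter_iff {n : ℕ} {p : Fin n → Prop} [DecidablePred p] (hp : Antitone p)
    (i : Fin n) : i.val < #{j | p j} ↔ p i := by
  constructor
  · intro hi
    by_contra hpi
    have hsub : ({j | p j} : Finset (Fin n)) ⊆ Iio i := fun j hj ↦
      mem_Iio.2 (lt_of_not_ge fun hij ↦ hpi (hp hij (mem_filter.1 hj).2))
    have := card_le_card hsub
    rw [Fin.card_Iio] at this
    omega
  · intro hpi
    have hsub : Iic i ⊆ ({j | p j} : Finset (Fin n)) := fun j hj ↦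
      mem_filter.2 ⟨mem_univ j, hp (mem_Iic.1 hj) hpi⟩
    have := card_le_card hsub
    rw [Fin.card_Iic] at this
    omega

theorem mem_xiSet_iff {g : ℕ} {b : Fin (2 * g + 1) → ℤ} (hb : StrictMono b) (k : ℤ) :
    k ∈ XiSet g b ↔ Even #{i | b i ≤ k} := by
  set j := #{i | b i ≤ k}
  have hle : ∀ i, b i ≤ k ↔ i.val < j := fun i ↦
    (Fin.lt_card_filter_iff (fun _ _ hij hk ↦ (hb.monotone hij).trans hk) i).symm
  have hj : j ≤ 2 * g + 1 := (card_filter_le _ _).trans_eq (by simp)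
  simp only [XiSet, Set.mem_union, Set.mem_ofPred_eq, Set.mem_iUnion, Set.mem_Ico, ← not_le, hle]
  constructor
  · rintro (h0 | ⟨i, h1, h2⟩)
    · exact ⟨0, by omega⟩
    · exact ⟨i + 1, by omega⟩
  · rintro ⟨m, hm⟩
    rcases Nat.eq_zero_or_pos m with rfl | hm0
    · exact Or.inl (by omega)
    · exact Or.inr ⟨⟨m - 1, by omega⟩, by dsimp only; omega, by dsimp only; omega⟩

theorem xiSet_eq_parityCut {g : ℕ} {b : Fin (2 * g + 1) → ℤ} (hb : StrictMono b) :
    XiSet g b = parityCut (univ.image b) := by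
  ext k
  rw [mem_xiSet_iff hb, parityCut, Set.mem_ofPred_eq, filter_image,
    card_image_of_injective _ hb.injective]

theorem parityCut_eq_xiSet {F : Finset ℤ} {g : ℕ} (hF : #F = 2 * g + 1) :
    parityCut F = XiSet g (F.orderEmbOfFin hF) := by
  rw [xiSet_eq_parityCut (F.orderEmbOfFin hF).strictMono, image_orderEmbOfFin_univ]

theorem flipSet_xiSet {g : ℕ} {b : Fin (2 * g + 1) → ℤ} (hb : StrictMono b) :
    flipSet (XiSet g b) = Set.range b := by
  rw [xiSet_eq_parityCut hb, flipSet_parityCut, coe_image, coe_univ, Set.image_univ]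

theorem xiSet_inj {g g' : ℕ} {b : Fin (2 * g + 1) → ℤ} {b' : Fin (2 * g' + 1) → ℤ}
    (hb : StrictMono b) (hb' : StrictMono b') (h : XiSet g b = XiSet g' b') :
    (⟨g, b⟩ : (g : ℕ) × (Fin (2 * g + 1) → ℤ)) = ⟨g', b'⟩ := by
  have hrange : Set.range b = Set.range b' := by
    rw [← flipSet_xiSet hb, ← flipSet_xiSet hb', h]
  have hcard := congrArg (fun s : Set ℤ ↦ Nat.card s) hrange
  simp only [Nat.card_range_of_injective hb.injective,
    Nat.card_range_of_injective hb'.injective, Nat.card_eq_fintype_card, Fintype.card_fin] at hcard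
  obtain rfl : g = g' := by omega
  rw [(hb.range_inj hb').1 hrange]

namespace IsMaya

theorem exists_forall_le_mem {M : Set ℤ} (hM : IsMaya M) :
    ∃ a : ℤ, ∀ k ≤ a, k ∈ M := by
  obtain ⟨c, hc⟩ := hM.2.bddBelow
  refine ⟨min c 0 - 1, fun k hk ↦ ?_⟩
  by_contra hkM
  have := hc ⟨show k < 0 by omega, hkM⟩
  omega

theorem exists_forall_ge_not_mem {M : Set ℤ} (hM : IsMaya M) :
    ∃ n : ℤ, ∀ k ≥ n, k ∉ M := by
  obtain ⟨c, hc⟩ := hM.1.bddAbove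
  refine ⟨max c 0 + 1, fun k hk hkM ↦ ?_⟩
  have := hc ⟨hkM, show 0 ≤ k by omega⟩
  omega

theorem exists_odd_card_eq_parityCut {M : Set ℤ} (hM : IsMaya M) :
    ∃ F : Finset ℤ, Odd #F ∧ M = parityCut F := by
  obtain ⟨a, ha⟩ := hM.exists_forall_le_mem
  obtain ⟨n, hn⟩ := hM.exists_forall_ge_not_mem
  have hsub := flipSet_subset_Ioc ha hn
  set F := ((Set.finite_Ioc a n).subset hsub).toFinset
  have hF : ∀ x ∈ F, a < x ∧ x ≤ n := fun x hx ↦ hsub ((Set.Finite.mem_toFinset _).1 hx)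
  have hMF : M = parityCut F := by
    refine eq_of_flipSet_eq (k₀ := a) (by rw [flipSet_parityCut, Set.Finite.coe_toFinset]) ?_
    have : ({x ∈ F | x ≤ a} : Finset ℤ) = ∅ := filter_eq_empty_iff.2 fun x hx ↦ by
      have := hF x hx; omega
    simp [parityCut, this, ha a le_rfl]
  refine ⟨F, ?_, hMF⟩
  have hnF : ({x ∈ F | x ≤ n} : Finset ℤ) = F := filter_true_of_mem fun x hx ↦ (hF x hx).2
  have hnM : n ∉ parityCut F := hMF ▸ hn n le_rfl
  simpa [parityCut, hnF] using hnM

end IsMaya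

theorem block_coordinates_exist_unique (M : Set ℤ) (hM : IsMaya M) :
    ∃! gb : (g : ℕ) × (Fin (2 * g + 1) → ℤ),
      StrictMono gb.2 ∧ M = XiSet gb.1 gb.2 := by
  obtain ⟨F, ⟨g, hg⟩, rfl⟩ := hM.exists_odd_card_eq_parityCut
  have hb := (F.orderEmbOfFin hg).strictMono
  refine ⟨⟨g, F.orderEmbOfFin hg⟩, ⟨hb, parityCut_eq_xiSet hg⟩, ?_⟩
  rintro ⟨g', b'⟩ ⟨hb', h⟩
  exact xiSet_inj hb' hb (h.symm.trans (parityCut_eq_xiSet hg))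
end

section
/- For a Maya diagram M, the boundary set B(M) = {b ∈ ℤ : exactly one of b ∈ M and b−1 ∈ M holds} is finite of odd cardinality, it satisfies f_{B(M)}(M) = M + 1, and it is the unique finite set B ⊆ ℤ such that f_B(M) = M + 1; moreover B(M) coincides with the set of block coordinates of M. -/
/-- The translate `M + n = {m + n : m ∈ M}`. -/
def mTranslate (M : Set ℤ) (n : ℤ) : Set ℤ := (fun m => m + n) '' M

/-- The boundary set of `M`: positions `b` such that exactly one of
`b ∈ M`, `b - 1 ∈ M` holds. -/
def mBoundary (M : Set ℤ) : Set ℤ := {b : ℤ | Xor' (b ∈ M) (b - 1 ∈ M)}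

open scoped Finset

lemma mem_mBoundary {M : Set ℤ} {x : ℤ} : x ∈ mBoundary M ↔ Xor (x ∈ M) (x - 1 ∈ M) := Iff.rfl

lemma mem_mTranslate_one {M : Set ℤ} {x : ℤ} : x ∈ mTranslate M 1 ↔ x - 1 ∈ M := by
  simp [mTranslate, sub_eq_add_neg]

lemma symmDiff_eq_mTranslate_one_iff (M B : Set ℤ) :
    symmDiff M B = mTranslate M 1 ↔ B = mBoundary M := by
  simp only [Set.ext_iff, Set.mem_symmDiff, mem_mTranslate_one, mem_mBoundary, xor_def]
  refine ⟨fun h x => ?_, fun h x => ?_⟩ <;> have := h x <;> tauto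

lemma IsMaya.exists_bounds {M : Set ℤ} (hM : IsMaya M) :
    ∃ a c : ℤ, a ≤ c ∧ (∀ k ≤ a, k ∈ M) ∧ ∀ k, c ≤ k → k ∉ M := by
  obtain ⟨a, ha⟩ := hM.2.bddBelow
  obtain ⟨c, hc⟩ := hM.1.bddAbove
  refine ⟨min a 0 - 1, max c 0 + 1, by omega, fun k hk => ?_, fun k hk hkM => ?_⟩
  · by_contra hkM
    have := ha ⟨show k < 0 by omega, hkM⟩
    omega
  · have := hc ⟨hkM, show 0 ≤ k by omega⟩
    omega

lemma mBoundary_subset_Ioc {M : Set ℤ} {a c : ℤ} (ha : ∀ k ≤ a, k ∈ M)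
    (hc : ∀ k, c ≤ k → k ∉ M) : mBoundary M ⊆ Set.Ioc a c := by
  intro x hx
  by_contra hx'
  rw [Set.mem_Ioc, not_and_or, not_lt, not_le] at hx'
  rcases hx' with hxa | hcx
  · exact hx.elim (fun h => h.2 (ha _ (by omega))) (fun h => h.2 (ha _ hxa))
  · exact hx.elim (fun h => hc _ (by omega) h.1) (fun h => hc _ (by omega) h.1)

lemma odd_ncard_mBoundary_inter_Ioc (M : Set ℤ) {a c : ℤ} (hac : a ≤ c) :
    Odd (mBoundary M ∩ Set.Ioc a c).ncard ↔ Xor (c ∈ M) (a ∈ M) := by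
  induction c, hac using Int.leInduction with
  | base => simp
  | succ c hac ih =>
    have hfin : (mBoundary M ∩ Set.Ioc a c).Finite := (Set.finite_Ioc a c).inter_of_right _
    have hnotMem : c + 1 ∉ mBoundary M ∩ Set.Ioc a c := fun h =>
      (lt_add_one c).not_ge (Set.mem_Ioc.mp h.2).2
    rw [← Set.insert_Ioc_right_eq_Ioc_add_one hac]
    by_cases hb : c + 1 ∈ mBoundary M
    · rw [Set.inter_insert_of_mem hb, Set.ncard_insert_of_notMem hnotMem hfin,
        Nat.odd_add_one, ih]
      simp only [mem_mBoundary, add_sub_cancel_right, xor_def] at hb ⊢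
      tauto
    · rw [Set.inter_insert_of_notMem hb, ih]
      simp only [mem_mBoundary, add_sub_cancel_right, xor_def] at hb ⊢
      tauto

lemma IsMaya.finite_mBoundary {M : Set ℤ} (hM : IsMaya M) : (mBoundary M).Finite := by
  obtain ⟨a, c, -, ha, hc⟩ := hM.exists_bounds
  exact (Set.finite_Ioc a c).subset (mBoundary_subset_Ioc ha hc)

lemma IsMaya.odd_ncard_mBoundary {M : Set ℤ} (hM : IsMaya M) : Odd (mBoundary M).ncard := by
  obtain ⟨a, c, hac, ha, hc⟩ := hM.exists_bounds
  rw [← Set.inter_eq_left.mpr (mBoundary_subset_Ioc ha hc), odd_ncard_mBoundary_inter_Ioc M hac]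
  exact Or.inr ⟨ha a le_rfl, hc c le_rfl⟩

lemma Monotone.le_iff_lt_card_filter_le {α : Type*} [LinearOrder α] {n : ℕ} {b : Fin n → α}
    (hb : Monotone b) (k : α) (j : Fin n) : b j ≤ k ↔ j.val < #{i | b i ≤ k} := by
  constructor
  · intro hj
    have : Finset.Iic j ⊆ ({i | b i ≤ k} : Finset (Fin n)) := fun i hi =>
      Finset.mem_filter.mpr ⟨Finset.mem_univ _, (hb (Finset.mem_Iic.mp hi)).trans hj⟩
    have := Finset.card_le_card this
    rw [Fin.card_Iic] at this
    omega
  · intro hj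
    by_contra! hkj
    have : ({i | b i ≤ k} : Finset (Fin n)) ⊆ Finset.Iio j := fun i hi =>
      Finset.mem_Iio.mpr (hb.reflect_lt ((Finset.mem_filter.mp hi).2.trans_lt hkj))
    have := Finset.card_le_card this
    rw [Fin.card_Iio] at this
    omega

lemma mem_XiSet_iff_even_card {g : ℕ} {b : Fin (2 * g + 1) → ℤ} (hb : Monotone b) (k : ℤ) :
    k ∈ XiSet g b ↔ Even #{j | b j ≤ k} := by
  set m := #{j | b j ≤ k}
  have hm : m ≤ 2 * g + 1 := (Finset.card_filter_le _ _).trans (by simp)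
  have hS := hb.le_iff_lt_card_filter_le k
  simp only [XiSet, Set.mem_union, Set.mem_ofPred_eq, Set.mem_iUnion, Set.mem_Ico]
  constructor
  · rintro (hk | ⟨i, h₁, h₂⟩)
    · have h₀ := (hS _).not.mp (not_le.mpr hk)
      exact ⟨0, by simp only at h₀; omega⟩
    · have h₁' := (hS _).mp h₁
      have h₂' := (hS _).not.mp (not_le.mpr h₂)
      exact ⟨i + 1, by simp only at h₁' h₂'; omega⟩
  · rintro ⟨r, hr⟩
    rcases Nat.eq_zero_or_pos r with rfl | hr₀
    · exact Or.inl (not_le.mp ((hS _).not.mpr (by simp only; omega)))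
    · refine Or.inr ⟨⟨r - 1, by omega⟩, (hS _).mpr (by simp only; omega),
        not_le.mp ((hS _).not.mpr (by simp only; omega))⟩

lemma mBoundary_setOf_even_card_le {ι : Type*} [Fintype ι] {b : ι → ℤ}
    (hb : Function.Injective b) : mBoundary {k | Even #{j | b j ≤ k}} = Set.range b := by
  classical
  ext x
  have hsplit : #{j | b j ≤ x} = #{j | b j ≤ x - 1} + #{j | b j = x} := by
    rw [← Finset.card_union_of_disjoint (Finset.disjoint_filter.mpr fun j _ h h' => by omega),
      ← Finset.filter_or]
    congr 1
    ext j
    simp only [Finset.mem_filter, Finset.mem_univ, true_and]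
    omega
  have hcard : #{j | b j = x} = if x ∈ Set.range b then 1 else 0 := by
    split_ifs with hx
    · obtain ⟨j, rfl⟩ := hx
      exact Finset.card_eq_one.mpr ⟨j, by ext; simp [hb.eq_iff]⟩
    · exact Finset.card_eq_zero.mpr (Finset.filter_eq_empty_iff.mpr fun j _ h => hx ⟨j, h⟩)
  simp only [mem_mBoundary, Set.mem_ofPred_eq, hsplit, hcard]
  split_ifs with hx
  · simp only [hx, iff_true, Nat.even_add_one, xor_def]
    tauto
  · simp only [hx, iff_false, add_zero, xor_def]
    tauto

lemma mBoundary_XiSet {g : ℕ} {b : Fin (2 * g + 1) → ℤ} (hb : StrictMono b) :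
    mBoundary (XiSet g b) = Set.range b := by
  have : XiSet g b = {k | Even #{j | b j ≤ k}} := Set.ext (mem_XiSet_iff_even_card hb.monotone)
  rw [this, mBoundary_setOf_even_card_le hb.injective]

theorem boundary_flips_to_translate (M : Set ℤ) (hM : IsMaya M) :
    (mBoundary M).Finite ∧ Odd (mBoundary M).ncard ∧
    symmDiff M (mBoundary M) = mTranslate M 1 ∧
    (∀ B : Set ℤ, B.Finite → symmDiff M B = mTranslate M 1 → B = mBoundary M) ∧
    (∀ (g : ℕ) (b : Fin (2 * g + 1) → ℤ), StrictMono b → M = XiSet g b →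
      mBoundary M = Set.range b) := by
  refine ⟨hM.finite_mBoundary, hM.odd_ncard_mBoundary,
    (symmDiff_eq_mTranslate_one_iff M _).mpr rfl,
    fun B _ h => (symmDiff_eq_mTranslate_one_iff M B).mp h, ?_⟩
  rintro g b hb rfl
  exact mBoundary_XiSet hb
end

section
/- Let M be a Maya diagram, n ≥ 1, and for 0 ≤ i ≤ n−1 let M_i = {m ∈ ℤ : m·n + i ∈ M} and let B_i be the boundary set of M_i. Then the sets n·B_i + i = {n·b + i : b ∈ B_i} for i = 0, …, n−1 are pairwise disjoint, and their union equals the symmetric difference (M + n) Δ M; equivalently, B = ⋃_{i=0}^{n−1} (n·B_i + i) is the unique finite set with f_B(M) = M + n. -/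
/-- The `i`-th modular section `M_i = {m : m·n + i ∈ M}` of `M`. -/
def mSect (M : Set ℤ) (n i : ℕ) : Set ℤ := {m : ℤ | m * (n : ℤ) + (i : ℤ) ∈ M}

/-- The rescaled boundary set `n·B(M_i) + i = {n·b + i : b ∈ B(M_i)}`. -/
def scaledBoundary (M : Set ℤ) (n i : ℕ) : Set ℤ :=
  (fun b => (n : ℤ) * b + (i : ℤ)) '' mBoundary (mSect M n i)

/-!
Membership of `x` in `n·B(M_i) + i` says exactly that `x ≡ i (mod n)` and that exactly one of
`x`, `x - n` lies in `M`; the residue condition makes the pieces disjoint, and the union over all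
residues is `{x | Xor (x ∈ M) (x - n ∈ M)} = (M + n) Δ M`. Uniqueness holds because
`f_B(M) = M Δ B` determines `B = M Δ (M + n)`.
-/

lemma mem_mTranslate_iff {M : Set ℤ} {n x : ℤ} : x ∈ mTranslate M n ↔ x - n ∈ M :=
  ⟨by rintro ⟨m, hm, rfl⟩; simpa using hm, fun h => ⟨x - n, h, sub_add_cancel x n⟩⟩

lemma mem_symmDiff_mTranslate_iff {M : Set ℤ} {n x : ℤ} :
    x ∈ symmDiff (mTranslate M n) M ↔ Xor (x ∈ M) (x - n ∈ M) := by
  rw [xor_comm, Set.mem_symmDiff, mem_mTranslate_iff]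
  rfl

lemma mem_mBoundary_mSect_iff {M : Set ℤ} {n i : ℕ} {b : ℤ} :
    b ∈ mBoundary (mSect M n i) ↔ Xor (n * b + i ∈ M) (n * b + i - n ∈ M) := by
  show Xor (b * n + i ∈ M) ((b - 1) * n + i ∈ M) ↔ _
  rw [mul_comm b, show (b - 1) * (n : ℤ) + i = n * b + i - n by ring]

lemma mem_scaledBoundary_iff {M : Set ℤ} {n i : ℕ} (hi : i < n) {x : ℤ} :
    x ∈ scaledBoundary M n i ↔ x % n = i ∧ Xor (x ∈ M) (x - n ∈ M) := by
  have hi' : (i : ℤ) % n = i := Int.emod_eq_of_lt (by positivity) (by exact_mod_cast hi)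
  constructor
  · rintro ⟨b, hb, rfl⟩
    refine ⟨?_, mem_mBoundary_mSect_iff.1 hb⟩
    dsimp only
    rw [add_comm, Int.add_mul_emod_self_left, hi']
  · rintro ⟨hres, hx⟩
    have hdiv : (n : ℤ) * (x / n) + i = x := by rw [← hres, Int.mul_ediv_add_emod]
    exact ⟨x / n, mem_mBoundary_mSect_iff.2 (by rwa [hdiv]), hdiv⟩

lemma disjoint_scaledBoundary {M : Set ℤ} {n i j : ℕ} (hi : i < n) (hj : j < n)
    (hij : i ≠ j) : Disjoint (scaledBoundary M n i) (scaledBoundary M n j) :=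
  Set.disjoint_left.2 fun _ hx hx' => hij <| by
    have := (mem_scaledBoundary_iff hi).1 hx
    have := (mem_scaledBoundary_iff hj).1 hx'
    omega

lemma iUnion_scaledBoundary {M : Set ℤ} {n : ℕ} :
    (⋃ i ∈ Finset.range n, scaledBoundary M n i) = symmDiff (mTranslate M n) M := by
  ext x
  simp only [Set.mem_iUnion, Finset.mem_range, mem_symmDiff_mTranslate_iff]
  constructor
  · rintro ⟨i, hi, hx⟩
    exact ((mem_scaledBoundary_iff hi).1 hx).2
  · intro hx
    have hn : (0 : ℤ) < n := by
      refine lt_of_le_of_ne (by positivity) fun h => ?_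
      rw [← h, sub_zero] at hx
      exact xor_self _ ▸ hx
    have := Int.emod_nonneg x hn.ne'
    have := Int.emod_lt_of_pos x hn
    have hi : (x % n).toNat < n := by omega
    exact ⟨_, hi, (mem_scaledBoundary_iff hi).2 ⟨by omega, hx⟩⟩

theorem translate_flip_decomposition_general (M : Set ℤ) (n : ℕ) :
    (∀ i j : ℕ, i < n → j < n → i ≠ j →
      Disjoint (scaledBoundary M n i) (scaledBoundary M n j)) ∧
    (⋃ i ∈ Finset.range n, scaledBoundary M n i) =
      symmDiff (mTranslate M (n : ℤ)) M ∧
    (∀ B : Set ℤ, B.Finite → symmDiff M B = mTranslate M (n : ℤ) →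
      B = ⋃ i ∈ Finset.range n, scaledBoundary M n i) := by
  refine ⟨fun i j => disjoint_scaledBoundary, iUnion_scaledBoundary, ?_⟩
  intro B _ hB
  rw [iUnion_scaledBoundary, ← hB, symmDiff_comm _ M, symmDiff_symmDiff_cancel_left]

theorem translate_flip_decomposition (M : Set ℤ) (n : ℕ) (hM : IsMaya M)
    (hn : 1 ≤ n) :
    (∀ i j : ℕ, i < n → j < n → i ≠ j →
      Disjoint (scaledBoundary M n i) (scaledBoundary M n j)) ∧
    (⋃ i ∈ Finset.range n, scaledBoundary M n i) =
      symmDiff (mTranslate M (n : ℤ)) M ∧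
    (∀ B : Set ℤ, B.Finite → symmDiff M B = mTranslate M (n : ℤ) →
      B = ⋃ i ∈ Finset.range n, scaledBoundary M n i) :=
  translate_flip_decomposition_general M n
end

section
/- For every natural number n, the function ψ_n(x) = e^{−x²/2} H_n(x), where H_n is the n-th physicists' Hermite polynomial defined by the Rodrigues formula H_n(x) = (−1)ⁿ e^{x²} (dⁿ/dxⁿ)[e^{−x²}], satisfies the harmonic oscillator equation −ψ_n''(x) + x² ψ_n(x) = (2n+1) ψ_n(x) for all real x. -/
/-- The `n`-th physicists' Hermite polynomial via the Rodrigues formula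
`H_n(x) = (−1)ⁿ e^{x²} (dⁿ/dxⁿ)[e^{−x²}](x)`. -/
noncomputable def physHermite (n : ℕ) (x : ℝ) : ℝ :=
  (-1 : ℝ) ^ n * Real.exp (x ^ 2) *
    iteratedDeriv n (fun t : ℝ => Real.exp (-t ^ 2)) x

/-- The oscillator eigenfunction `ψ_n(x) = e^{−x²/2} H_n(x)`. -/
noncomputable def oscEigenfun (n : ℕ) (x : ℝ) : ℝ :=
  Real.exp (-x ^ 2 / 2) * physHermite n x

/-!
Write `g(x) = e^{-x²}`, so that `ψ_n = (-1)ⁿ e^{x²/2} g⁽ⁿ⁾`. Differentiating `g' = -2x g`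
`n + 1` times gives the recurrence `g⁽ⁿ⁺²⁾ = -2x g⁽ⁿ⁺¹⁾ - 2(n+1) g⁽ⁿ⁾`, and for any `φ`,
`(e^{x²/2} φ)'' = e^{x²/2} (φ'' + 2x φ' + (x² + 1) φ)`. With `φ = g⁽ⁿ⁾` the recurrence cancels the
`φ''` and `2x φ'` terms, leaving `ψ_n'' = (x² - 2n - 1) ψ_n`.
-/

open Real
open scoped ContDiff

section IteratedDeriv

variable {𝕜 : Type*} [NontriviallyNormedField 𝕜]

theorem ContDiff.hasDerivAt_iteratedDeriv {F : Type*} [NormedAddCommGroup F] [NormedSpace 𝕜 F]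
    {f : 𝕜 → F} (hf : ContDiff 𝕜 ∞ f) (n : ℕ) (x : 𝕜) :
    HasDerivAt (iteratedDeriv n f) (iteratedDeriv (n + 1) f x) x := by
  rw [iteratedDeriv_succ]
  exact (hf.differentiable_iteratedDeriv n
    (by exact_mod_cast ENat.natCast_lt_top n)).differentiableAt.hasDerivAt

theorem iteratedDeriv_add_two_of_deriv_eq_mul {f : 𝕜 → 𝕜} {c : 𝕜} (hf : ContDiff 𝕜 ∞ f)
    (hderiv : deriv f = fun x => c * x * f x) (n : ℕ) (x : 𝕜) :
    iteratedDeriv (n + 2) f x =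
      c * x * iteratedDeriv (n + 1) f x + c * (n + 1) * iteratedDeriv n f x := by
  induction n generalizing x with
  | zero =>
    have h1 : iteratedDeriv 1 f = fun x => c * x * f x := by rw [iteratedDeriv_one, hderiv]
    have h := ((hasDerivAt_id' x).const_mul c).fun_mul (hf.hasDerivAt_iteratedDeriv 0 x)
    rw [iteratedDeriv_zero, ← h1] at h
    rw [(hf.hasDerivAt_iteratedDeriv 1 x).unique h]
    simp only [zero_add, iteratedDeriv_zero, Nat.cast_zero]
    ring
  | succ n ih =>
    have h := (((hasDerivAt_id' x).const_mul c).fun_mul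
      (hf.hasDerivAt_iteratedDeriv (n + 1) x)).fun_add
        ((hf.hasDerivAt_iteratedDeriv n x).const_mul (c * (n + 1)))
    rw [← funext ih] at h
    rw [(hf.hasDerivAt_iteratedDeriv (n + 2) x).unique h]
    push_cast
    ring

end IteratedDeriv

theorem contDiff_exp_neg_sq : ContDiff ℝ ∞ fun t : ℝ => exp (-t ^ 2) := by
  fun_prop

theorem deriv_exp_neg_sq :
    deriv (fun t : ℝ => exp (-t ^ 2)) = fun x => -2 * x * exp (-x ^ 2) := by
  funext x
  rw [((hasDerivAt_pow 2 x).fun_neg.exp).deriv]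
  push_cast
  ring

theorem iteratedDeriv_two_exp_half_sq_mul {φ φ' φ'' : ℝ → ℝ}
    (hφ : ∀ x, HasDerivAt φ (φ' x) x) (hφ' : ∀ x, HasDerivAt φ' (φ'' x) x) (x : ℝ) :
    iteratedDeriv 2 (fun x => exp (x ^ 2 / 2) * φ x) x =
      exp (x ^ 2 / 2) * (φ'' x + 2 * x * φ' x + (x ^ 2 + 1) * φ x) := by
  have hexp (x : ℝ) : HasDerivAt (fun x => exp (x ^ 2 / 2)) (exp (x ^ 2 / 2) * x) x := by
    convert ((hasDerivAt_pow 2 x).div_const 2).exp using 1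
    push_cast
    ring
  have h1 : deriv (fun x => exp (x ^ 2 / 2) * φ x) =
      fun x => exp (x ^ 2 / 2) * (φ' x + x * φ x) := by
    funext x
    rw [((hexp x).fun_mul (hφ x)).deriv]
    ring
  have h2 := (hexp x).fun_mul ((hφ' x).fun_add ((hasDerivAt_id' x).fun_mul (hφ x)))
  rw [iteratedDeriv_succ, iteratedDeriv_one, h1, h2.deriv]
  ring

theorem oscEigenfun_eq (n : ℕ) :
    oscEigenfun n = fun x =>
      exp (x ^ 2 / 2) * ((-1) ^ n * iteratedDeriv n (fun t : ℝ => exp (-t ^ 2)) x) := by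
  funext x
  have hexp : exp (-x ^ 2 / 2) * exp (x ^ 2) = exp (x ^ 2 / 2) := by
    rw [← exp_add]
    ring_nf
  rw [oscEigenfun, physHermite, ← hexp]
  ring

theorem hermite_oscillator_equation (n : ℕ) (x : ℝ) :
    -iteratedDeriv 2 (oscEigenfun n) x + x ^ 2 * oscEigenfun n x =
      (2 * (n : ℝ) + 1) * oscEigenfun n x := by
  set g : ℝ → ℝ := fun t => exp (-t ^ 2)
  have hφ (k : ℕ) (x : ℝ) : HasDerivAt (fun x => (-1) ^ n * iteratedDeriv k g x)
      ((-1) ^ n * iteratedDeriv (k + 1) g x) x :=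
    (contDiff_exp_neg_sq.hasDerivAt_iteratedDeriv k x).const_mul _
  have hrec := iteratedDeriv_add_two_of_deriv_eq_mul contDiff_exp_neg_sq deriv_exp_neg_sq n x
  rw [oscEigenfun_eq, iteratedDeriv_two_exp_half_sq_mul (hφ n) (hφ (n + 1))]
  linear_combination (-exp (x ^ 2 / 2) * (-1) ^ n) * hrec
end
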